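/- Let K be an algebraically closed field equipped with a surjective Krull valuation val : K → Γ ∪ {∞} and let f be a nonzero Laurent polynomial in N variables over K. Then every point of the hypersurface associated to the tropicalization of f is the value of a zero of f: for every γ ∈ Γ^N such that the minimum min_{α ∈ E(f)} (val(φ_α) + α·γ) is attained for at least two distinct exponents α, there exists x ∈ (K∖{0})^N with f(x) = 0 and (val(x_1),…,val(x_N)) = γ. That is, V(Tf) ⊆ TV(f). -/

import Mathlib

open Finset Pointwise

/-- The tropical dot product `α·γ = ∑ i, α i • γ i`. -/
noncomputable def tropDot {Γ : Type*} [AddCommGroup Γ] [LinearOrder Γ] [IsOrderedAddMonoid Γ] {N : ℕ}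
    (α : Fin N → ℤ) (γ : Fin N → Γ) : Γ :=
  ∑ i, α i • γ i

/-- The tropicalization of a Laurent polynomial `f` (an element of the group algebra
`K[ℤ^N]`), evaluated at `γ ∈ Γ^N`:  `Tf(γ) = min_{α ∈ E(f)} (val φ_α + α·γ)`,
computed in `Γ ∪ {∞}` (the min over the empty set is `∞`). -/
noncomputable def tropicalize {Γ : Type*} [AddCommGroup Γ] [LinearOrder Γ] [IsOrderedAddMonoid Γ]
    {K : Type*} [Field K] {N : ℕ} (val : K → WithTop Γ)
    (f : AddMonoidAlgebra K (Fin N → ℤ)) (γ : Fin N → Γ) : WithTop Γ :=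
  f.coeff.support.inf fun α => val (f.coeff α) + WithTop.some (tropDot α γ)

/-- `D_γ(Tf)`: the set of exponents of `f` at which the minimum defining `Tf(γ)`
is attained. -/
def tropD {Γ : Type*} [AddCommGroup Γ] [LinearOrder Γ] [IsOrderedAddMonoid Γ] {K : Type*} [Field K] {N : ℕ}
    (val : K → WithTop Γ) (f : AddMonoidAlgebra K (Fin N → ℤ))
    (γ : Fin N → Γ) : Set (Fin N → ℤ) :=
  {α | α ∈ f.coeff.support ∧ tropicalize val f γ = val (f.coeff α) + WithTop.some (tropDot α γ)}

/-- `V(Tf)`: the hypersurface associated to the tropicalization of `f`,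
i.e. the points `γ` where the minimum is attained at least twice. -/
def tropV {Γ : Type*} [AddCommGroup Γ] [LinearOrder Γ] [IsOrderedAddMonoid Γ] {K : Type*} [Field K] {N : ℕ}
    (val : K → WithTop Γ) (f : AddMonoidAlgebra K (Fin N → ℤ)) :
    Set (Fin N → Γ) :=
  {γ | ∃ α β : Fin N → ℤ, α ≠ β ∧ α ∈ tropD val f γ ∧ β ∈ tropD val f γ}

/-- Evaluation of a Laurent polynomial at a point of the torus `(K∖{0})^N`:
`f(x) = ∑_{α ∈ E(f)} φ_α x^α`. -/
noncomputable def lEval {K : Type*} [Field K] {N : ℕ}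
    (f : AddMonoidAlgebra K (Fin N → ℤ)) (x : Fin N → Kˣ) : K :=
  ∑ α ∈ f.coeff.support, f.coeff α * ((∏ i, (x i) ^ (α i) : Kˣ) : K)

/-!
Choose `u ∈ ℤ^N` on which the exponents of `f` have pairwise distinct dot products, and
`c ∈ (Kˣ)^N` with `val c = γ`. Along the curve `t ↦ c · t^u`, `f` becomes a one-variable Laurent
polynomial whose coefficients have valuations `val φ_α + α·γ`, so its minimal coefficient valuation
is attained twice. Over an algebraically closed field such a polynomial has a root `r` with
`val r = 0`: otherwise every linear factor `X - r` of it has a coefficient of strictly minimal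
valuation (in degree `0` if `val r < 0`, in degree `1` if `val r > 0`), a property stable under
products. Then `x = c · r^u` is a zero of `f` with `val x = γ`.
-/

open Polynomial

theorem Finset.prod_zpow_eq_zpow_sum {ι G : Type*} [CommGroup G] (s : Finset ι) (f : ι → ℤ)
    (a : G) : ∏ i ∈ s, a ^ f i = a ^ ∑ i ∈ s, f i := by
  classical
  induction s using Finset.induction_on with
  | empty => simp
  | insert j s hj ih => rw [prod_insert hj, sum_insert hj, ih, zpow_add]

theorem prod_mul_zpow_zpow {N : ℕ} {G : Type*} [CommGroup G] (c : Fin N → G) (r : G)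
    (u α : Fin N → ℤ) : ∏ i, (c i * r ^ u i) ^ α i = (∏ i, c i ^ α i) * r ^ tropDot α u := by
  simp only [mul_zpow, prod_mul_distrib, ← zpow_mul, prod_zpow_eq_zpow_sum, tropDot, smul_eq_mul,
    mul_comm (u _)]

theorem tropDot_pow_eq_eval_ofFn {N : ℕ} (α : Fin N → ℤ) (t : ℤ) :
    tropDot α (fun i => t ^ (i : ℕ)) = (ofFn N α).eval t := by
  simp [tropDot, ofFn_eq_sum_monomial, eval_finsetSum]

theorem exists_injOn_tropDot {N : ℕ} (s : Finset (Fin N → ℤ)) :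
    ∃ u : Fin N → ℤ, Set.InjOn (fun α => tropDot α u) s := by
  classical
  obtain ⟨t, ht⟩ := Infinite.exists_notMem_finset
    (s.offDiag.biUnion fun x => (ofFn N (x.1 - x.2)).roots.toFinset)
  refine ⟨fun i => t ^ (i : ℕ), fun α hα β hβ hαβ => by_contra fun hne => ht ?_⟩
  have hroot : (ofFn N (α - β)).IsRoot t := by
    rw [IsRoot, map_sub, eval_sub, ← tropDot_pow_eq_eval_ofFn, ← tropDot_pow_eq_eval_ofFn,
      sub_eq_zero]
    exact hαβ
  have hne0 : ofFn N (α - β) ≠ 0 := (map_ne_zero_iff _ (injective_ofFn N)).2 (sub_ne_zero.2 hne)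
  exact mem_biUnion.2 ⟨(α, β), mem_offDiag.2 ⟨hα, hβ, hne⟩,
    Multiset.mem_toFinset.2 ((mem_roots hne0).2 hroot)⟩

theorem map_one_eq_zero_of_map_mul {M Γ : Type*} [MulOneClass M] [AddGroup Γ] (f : M → WithTop Γ)
    (hmul : ∀ x y, f (x * y) = f x + f y) (h1 : f 1 ≠ ⊤) : f 1 = 0 := by
  obtain ⟨g, hg⟩ := WithTop.ne_top_iff_exists.1 h1
  have hgg := hmul 1 1
  rw [mul_one, ← hg, ← WithTop.coe_add, WithTop.coe_inj] at hgg
  rw [← hg, left_eq_add.1 hgg, WithTop.coe_zero]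

namespace AddValuation

variable {R Γ₀ : Type*} [CommRing R] [LinearOrderedAddCommMonoidWithTop Γ₀] (v : AddValuation R Γ₀)

theorem map_sum_eq_of_lt {ι : Type*} [DecidableEq ι] {s : Finset ι} {f : ι → R} {j : ι}
    (hj : j ∈ s) (hf : ∀ i ∈ s \ {j}, v (f j) < v (f i)) : v (∑ i ∈ s, f i) = v (f j) := by
  rw [sum_eq_add_sum_sdiff_singleton_of_mem hj]
  by_cases htop : v (f j) = ⊤
  · have : s \ {j} = ∅ := eq_empty_of_forall_notMem fun i hi => not_top_lt (htop ▸ hf i hi)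
    rw [this, sum_empty, add_zero]
  · exact v.map_add_eq_of_lt_left (v.map_lt_sum htop hf)

theorem map_prod {ι : Type*} (s : Finset ι) (f : ι → R) :
    v (∏ i ∈ s, f i) = ∑ i ∈ s, v (f i) := by
  classical
  induction s using Finset.induction_on with
  | empty => simp
  | insert a s ha ih => simp [prod_insert ha, sum_insert ha, v.map_mul, ih]

end AddValuation

section Valued

variable {Γ : Type*} [AddCommGroup Γ] [LinearOrder Γ] [IsOrderedAddMonoid Γ] {K : Type*} [Field K]
  (v : AddValuation K (WithTop Γ))

namespace AddValuation

theorem map_units_zpow (x : Kˣ) {g : Γ} (hx : v x = g) (n : ℤ) : v ↑(x ^ n) = ↑(n • g) := by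
  rw [Units.val_zpow_eq_zpow_val]
  rcases n with k | k <;> simp [zpow_negSucc, map_pow, hx]

theorem map_units_prod_zpow {N : ℕ} (c : Fin N → Kˣ) {γ : Fin N → Γ} (hc : ∀ i, v (c i) = γ i)
    (α : Fin N → ℤ) : v ↑(∏ i, c i ^ α i) = ↑(tropDot α γ) := by
  rw [Units.coe_prod, map_prod, tropDot, WithTop.coe_sum]
  exact sum_congr rfl fun i _ => v.map_units_zpow _ (hc i) _

end AddValuation

namespace Polynomial

def HasDominantCoeff (p : K[X]) (k : ℕ) : Prop :=
  ∀ j ≠ k, v (p.coeff k) < v (p.coeff j)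

namespace HasDominantCoeff

variable {v} {p q : K[X]} {k l : ℕ}

theorem map_coeff_ne_top (hp : HasDominantCoeff v p k) : v (p.coeff k) ≠ ⊤ :=
  (hp (k + 1) k.succ_ne_self).ne_top

theorem map_coeff_le (hp : HasDominantCoeff v p k) (j : ℕ) : v (p.coeff k) ≤ v (p.coeff j) := by
  rcases eq_or_ne j k with rfl | hj
  · rfl
  · exact (hp j hj).le

theorem eq_of_forall_le (hp : HasDominantCoeff v p k) {i : ℕ}
    (hi : ∀ j, v (p.coeff i) ≤ v (p.coeff j)) : i = k := by
  by_contra hik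
  exact (hp i hik).not_ge (hi k)

theorem map_add_lt_map_coeff_mul_coeff (hp : HasDominantCoeff v p k)
    (hq : HasDominantCoeff v q l) {x : ℕ × ℕ} (hx : x ≠ (k, l)) :
    v (p.coeff k) + v (q.coeff l) < v (p.coeff x.1 * q.coeff x.2) := by
  rw [v.map_mul]
  rcases eq_or_ne x.1 k with h1 | h1
  · have h2 : x.2 ≠ l := fun h2 => hx (Prod.ext h1 h2)
    rw [h1]
    exact WithTop.add_lt_add_left hp.map_coeff_ne_top (hq _ h2)
  · exact WithTop.add_lt_add_of_lt_of_le hq.map_coeff_ne_top (hp _ h1) (hq.map_coeff_le _)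

theorem mul (hp : HasDominantCoeff v p k) (hq : HasDominantCoeff v q l) :
    HasDominantCoeff v (p * q) (k + l) := by
  have hkl : v ((p * q).coeff (k + l)) = v (p.coeff k) + v (q.coeff l) := by
    rw [coeff_mul, v.map_sum_eq_of_lt (j := (k, l)) (mem_antidiagonal.2 rfl), v.map_mul]
    intro x hx
    rw [v.map_mul]
    exact hp.map_add_lt_map_coeff_mul_coeff hq ((mem_sdiff.1 hx).2 ∘ mem_singleton.2)
  intro n hn
  rw [hkl, coeff_mul]
  refine v.map_lt_sum (WithTop.add_ne_top.2 ⟨hp.map_coeff_ne_top, hq.map_coeff_ne_top⟩)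
    fun x hx => hp.map_add_lt_map_coeff_mul_coeff hq fun h => hn ?_
  rw [← mem_antidiagonal.1 hx, h]

end HasDominantCoeff

theorem hasDominantCoeff_C {a : K} (ha : a ≠ 0) : HasDominantCoeff v (C a) 0 := by
  intro j hj
  simp [coeff_C, hj, v.ne_top_iff.2 ha, lt_top_iff_ne_top]

theorem exists_hasDominantCoeff_X_sub_C {r : K} (hr : v r ≠ 0) :
    ∃ k, HasDominantCoeff v (X - C r) k := by
  rcases hr.lt_or_gt with hr | hr
  · refine ⟨0, fun j hj => ?_⟩
    rcases j with _ | _ | j <;> simp_all [coeff_X, coeff_C, lt_top_iff_ne_top, hr.ne_top]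
  · refine ⟨1, fun j hj => ?_⟩
    rcases j with _ | _ | j <;> simp_all [coeff_X, coeff_C]

theorem exists_hasDominantCoeff_multiset_prod (s : Multiset K[X])
    (hs : ∀ p ∈ s, ∃ k, HasDominantCoeff v p k) : ∃ k, HasDominantCoeff v s.prod k := by
  induction s using Multiset.induction_on with
  | empty => exact ⟨0, by simpa using hasDominantCoeff_C v one_ne_zero⟩
  | cons p s ih =>
    obtain ⟨k, hk⟩ := hs p (Multiset.mem_cons_self p s)
    obtain ⟨l, hl⟩ := ih fun q hq => hs q (Multiset.mem_cons_of_mem hq)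
    exact ⟨k + l, by simpa using hk.mul hl⟩

theorem exists_isRoot_map_eq_zero [IsAlgClosed K] (p : K[X]) {j₁ j₂ : ℕ} (hne : j₁ ≠ j₂)
    (h₁ : ∀ j, v (p.coeff j₁) ≤ v (p.coeff j)) (h₂ : ∀ j, v (p.coeff j₂) ≤ v (p.coeff j)) :
    ∃ r, p.IsRoot r ∧ v r = 0 := by
  by_contra! hroots
  rcases eq_or_ne p 0 with rfl | hp
  · exact hroots 1 (by simp) v.map_one
  obtain ⟨k, hk⟩ : ∃ k, HasDominantCoeff v p k := by
    rw [(IsAlgClosed.splits p).eq_prod_roots]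
    obtain ⟨l, hl⟩ := exists_hasDominantCoeff_multiset_prod v _ fun q hq => by
      obtain ⟨r, hr, rfl⟩ := Multiset.mem_map.1 hq
      exact exists_hasDominantCoeff_X_sub_C v (hroots r ((mem_roots hp).1 hr))
    exact ⟨0 + l, (hasDominantCoeff_C v (leadingCoeff_ne_zero.2 hp)).mul hl⟩
  exact hne ((hk.eq_of_forall_le h₁).trans (hk.eq_of_forall_le h₂).symm)

end Polynomial

theorem exists_map_eq_zero_sum_zpow_eq_zero [IsAlgClosed K] {ι : Type*} {s : Finset ι}
    {a : ι → K} {e : ι → ℤ} (he : Set.InjOn e s) {i₁ i₂ : ι} (h₁ : i₁ ∈ s) (h₂ : i₂ ∈ s)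
    (hne : i₁ ≠ i₂) (hmin₁ : ∀ i ∈ s, v (a i₁) ≤ v (a i)) (hmin₂ : ∀ i ∈ s, v (a i₂) ≤ v (a i)) :
    ∃ r : Kˣ, v r = 0 ∧ ∑ i ∈ s, a i * ↑(r ^ e i) = 0 := by
  classical
  set m := s.inf' ⟨i₁, h₁⟩ e
  set d : ι → ℕ := fun i => (e i - m).toNat
  have hd : ∀ i ∈ s, e i = m + d i := fun i hi => by
    have := inf'_le e hi
    simp only [d]
    omega
  have hd_inj : Set.InjOn d s := fun i hi j hj h => he hi hj (by rw [hd i hi, hd j hj, h])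
  set p : K[X] := ∑ i ∈ s, monomial (d i) (a i)
  have hcoeff : ∀ i ∈ s, p.coeff (d i) = a i := fun i hi => by
    rw [finsetSum_coeff, sum_eq_single_of_mem i hi fun j hj hji => ?_, coeff_monomial, if_pos rfl]
    rw [coeff_monomial, if_neg (hd_inj.ne hj hi hji)]
  have hmin : ∀ i ∈ s, (∀ j ∈ s, v (a i) ≤ v (a j)) → ∀ n, v (p.coeff (d i)) ≤ v (p.coeff n) := by
    intro i hi hi' n
    rw [hcoeff i hi, finsetSum_coeff]
    refine v.map_le_sum fun j hj => ?_
    rw [coeff_monomial]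
    split_ifs
    · exact hi' j hj
    · simp
  obtain ⟨r, hroot, hr⟩ := exists_isRoot_map_eq_zero v p (hd_inj.ne h₁ h₂ hne)
    (hmin i₁ h₁ hmin₁) (hmin i₂ h₂ hmin₂)
  have hr0 : r ≠ 0 := v.ne_top_iff.1 (hr ▸ WithTop.coe_ne_top)
  refine ⟨Units.mk0 r hr0, hr, ?_⟩
  calc ∑ i ∈ s, a i * ↑(Units.mk0 r hr0 ^ e i) = r ^ m * p.eval r := by
        rw [eval_finsetSum, mul_sum]
        refine sum_congr rfl fun i hi => ?_
        rw [Units.val_zpow_eq_zpow_val, Units.val_mk0, eval_monomial, hd i hi, zpow_add₀ hr0,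
          zpow_natCast]
        ring
    _ = 0 := by rw [hroot.eq_zero, mul_zero]

end Valued

theorem tropV_subset_tropicalVariety_general {Γ : Type*} [AddCommGroup Γ] [LinearOrder Γ] [IsOrderedAddMonoid Γ]
    {K : Type*} [Field K] [IsAlgClosed K] {N : ℕ}
    (val : K → WithTop Γ)
    (hval0 : ∀ x : K, val x = ⊤ ↔ x = 0)
    (hvalmul : ∀ x y : K, val (x * y) = val x + val y)
    (hvaladd : ∀ x y : K, min (val x) (val y) ≤ val (x + y))
    (hvalsurj : ∀ g : Γ, ∃ a : K, val a = WithTop.some g)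
    (f : AddMonoidAlgebra K (Fin N → ℤ))
    (γ : Fin N → Γ) (hγ : γ ∈ tropV val f) :
    ∃ x : Fin N → Kˣ, lEval f x = 0 ∧ ∀ i, val (x i : K) = WithTop.some (γ i) := by
  let v := AddValuation.of val ((hval0 0).2 rfl)
    (map_one_eq_zero_of_map_mul val hvalmul (mt (hval0 1).1 one_ne_zero)) hvaladd hvalmul
  have hlift (g : Γ) : ∃ c : Kˣ, v c = g := by
    obtain ⟨a, ha⟩ := hvalsurj g
    exact ⟨Units.mk0 a ((hval0 a).not.1 (ha ▸ WithTop.coe_ne_top)), ha⟩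
  choose c hc using fun i => hlift (γ i)
  let a α := f.coeff α * ↑(∏ i, c i ^ α i)
  have hmin {α} (hα : α ∈ tropD val f γ) : ∀ β ∈ f.coeff.support, v (a α) ≤ v (a β) :=
    fun β hβ => by
      rw [v.map_mul, v.map_mul, v.map_units_prod_zpow c hc, v.map_units_prod_zpow c hc]
      exact hα.2.symm.trans_le (inf_le hβ)
  obtain ⟨α₁, α₂, hne, hα₁, hα₂⟩ := hγ
  obtain ⟨u, hu⟩ := exists_injOn_tropDot f.coeff.support
  obtain ⟨r, hr, hroot⟩ :=
    exists_map_eq_zero_sum_zpow_eq_zero v hu hα₁.1 hα₂.1 hne (hmin hα₁) (hmin hα₂)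
  refine ⟨fun i => c i * r ^ u i, ?_, fun i => ?_⟩
  · rw [lEval, ← hroot]
    exact sum_congr rfl fun α _ => by rw [prod_mul_zpow_zpow, Units.val_mul, mul_assoc]
  · change v ↑(c i * r ^ u i) = γ i
    rw [Units.val_mul, v.map_mul, hc, v.map_units_zpow r hr, smul_zero, WithTop.coe_zero, add_zero]

/-- Every point of the hypersurface associated to the tropicalization of `f` is the
value of a zero of `f`:  `V(Tf) ⊆ TV(f)`. -/
theorem tropV_subset_tropicalVariety {Γ : Type*} [AddCommGroup Γ] [LinearOrder Γ] [IsOrderedAddMonoid Γ]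
    {K : Type*} [Field K] [IsAlgClosed K] {N : ℕ}
    (val : K → WithTop Γ)
    (hval0 : ∀ x : K, val x = ⊤ ↔ x = 0)
    (hvalmul : ∀ x y : K, val (x * y) = val x + val y)
    (hvaladd : ∀ x y : K, min (val x) (val y) ≤ val (x + y))
    (hvalsurj : ∀ g : Γ, ∃ a : K, val a = WithTop.some g)
    (f : AddMonoidAlgebra K (Fin N → ℤ)) (hf : f ≠ 0)
    (γ : Fin N → Γ) (hγ : γ ∈ tropV val f) :
    ∃ x : Fin N → Kˣ, lEval f x = 0 ∧ ∀ i, val (x i : K) = WithTop.some (γ i) :=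
  tropV_subset_tropicalVariety_general val hval0 hvalmul hvaladd hvalsurj f γ hγ
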